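/- Let C and D be nonempty nearly convex subsets of X such that ri C ∩ ri D ≠ ∅. Then ri(C ∩ D) = ri C ∩ ri D. -/

import Mathlib

/-!
A convex set and its closure have the same relative interior, so every set squeezed between a
convex set `c` and its closure has relative interior `ri c`; in particular we may replace `C` and
`D` by convex sets `c`, `d`. The engine is the segment principle: the open segment from a point
of `ri c` to a point of `cl c` lies in `ri c`. Starting from a common point of `ri c` and `ri d`,
it gives `cl c ∩ cl d ⊆ cl (ri c ∩ ri d)`, so `C ∩ D` is squeezed between the convex set
`ri c ∩ ri d` and its closure. Being an intersection of relatively open sets, `ri c ∩ ri d` is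
its own relative interior.
-/

open Set Pointwise

/-- A set is nearly convex if it is sandwiched between a convex set and its closure. -/
def NearlyConvex {X : Type*} [NormedAddCommGroup X] [NormedSpace ℝ X] (S : Set X) : Prop :=
  ∃ C : Set X, Convex ℝ C ∧ C ⊆ S ∧ S ⊆ closure C

/-- Two sets are nearly equal if they have the same closure and the same relative
(intrinsic) interior. -/
def NearEq {X : Type*} [NormedAddCommGroup X] [NormedSpace ℝ X] (C D : Set X) : Prop :=
  closure C = closure D ∧ intrinsicInterior ℝ C = intrinsicInterior ℝ D

open AffineMap Topology

section AddTorsor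

variable {𝕜 V P : Type*} [Ring 𝕜] [AddCommGroup V] [Module 𝕜 V] [TopologicalSpace P]
  [AddTorsor V P] {s t : Set P} {x : P}

theorem mem_intrinsicInterior_iff_exists_isOpen :
    x ∈ intrinsicInterior 𝕜 s ↔
      x ∈ affineSpan 𝕜 s ∧ ∃ U : Set P, IsOpen U ∧ x ∈ U ∧ U ∩ affineSpan 𝕜 s ⊆ s := by
  constructor
  · rintro ⟨⟨x, hxA⟩, hx, rfl⟩
    obtain ⟨W, hWs, hW, hxW⟩ := mem_interior.1 hx
    obtain ⟨U, hU, rfl⟩ := isOpen_induced_iff.1 hW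
    exact ⟨hxA, U, hU, hxW, fun y hy => @hWs ⟨y, hy.2⟩ hy.1⟩
  · rintro ⟨hxA, U, hU, hxU, hUs⟩
    refine ⟨⟨x, hxA⟩, mem_interior.2 ⟨((↑) : affineSpan 𝕜 s → P) ⁻¹' U, fun y hy => hUs ⟨hy, y.2⟩,
      isOpen_induced hU, hxU⟩, rfl⟩

theorem IsOpen.inter_affineSpan_subset_intrinsicInterior {U : Set P} (hU : IsOpen U)
    (hUs : U ∩ affineSpan 𝕜 s ⊆ s) : U ∩ affineSpan 𝕜 s ⊆ intrinsicInterior 𝕜 s :=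
  fun _ hx => mem_intrinsicInterior_iff_exists_isOpen.2 ⟨hx.2, U, hU, hx.1, hUs⟩

theorem intrinsicInterior_mono_of_affineSpan_eq (hst : s ⊆ t)
    (hA : affineSpan 𝕜 s = affineSpan 𝕜 t) : intrinsicInterior 𝕜 s ⊆ intrinsicInterior 𝕜 t := by
  intro y hy
  obtain ⟨hyA, U, hU, hyU, hUs⟩ := mem_intrinsicInterior_iff_exists_isOpen.1 hy
  rw [hA] at hyA hUs
  exact hU.inter_affineSpan_subset_intrinsicInterior (hUs.trans hst) ⟨hyU, hyA⟩

theorem intrinsicInterior_inter_intrinsicInterior (s t : Set P) :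
    intrinsicInterior 𝕜 (intrinsicInterior 𝕜 s ∩ intrinsicInterior 𝕜 t) =
      intrinsicInterior 𝕜 s ∩ intrinsicInterior 𝕜 t := by
  set K := intrinsicInterior 𝕜 s ∩ intrinsicInterior 𝕜 t
  refine intrinsicInterior_subset.antisymm fun x hx => ?_
  obtain ⟨-, U, hU, hxU, hUs⟩ := mem_intrinsicInterior_iff_exists_isOpen.1 hx.1
  obtain ⟨-, W, hW, hxW, hWt⟩ := mem_intrinsicInterior_iff_exists_isOpen.1 hx.2
  have hKs : affineSpan 𝕜 K ≤ affineSpan 𝕜 s :=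
    affineSpan_mono 𝕜 (inter_subset_left.trans intrinsicInterior_subset)
  have hKt : affineSpan 𝕜 K ≤ affineSpan 𝕜 t :=
    affineSpan_mono 𝕜 (inter_subset_right.trans intrinsicInterior_subset)
  refine (hU.inter hW).inter_affineSpan_subset_intrinsicInterior ?_
    ⟨⟨hxU, hxW⟩, subset_affineSpan 𝕜 K hx⟩
  rintro y ⟨⟨hyU, hyW⟩, hyK⟩
  exact ⟨hU.inter_affineSpan_subset_intrinsicInterior hUs ⟨hyU, hKs hyK⟩,
    hW.inter_affineSpan_subset_intrinsicInterior hWt ⟨hyW, hKt hyK⟩⟩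

end AddTorsor

section TopologicalVectorSpace

variable {E : Type*} [AddCommGroup E] [Module ℝ E] [TopologicalSpace E] [IsTopologicalAddGroup E]
  [ContinuousSMul ℝ E] {s : Set E} {x y : E}

theorem Convex.openSegment_intrinsicInterior_self_subset_intrinsicInterior (hs : Convex ℝ s)
    (hx : x ∈ intrinsicInterior ℝ s) (hy : y ∈ s) :
    openSegment ℝ x y ⊆ intrinsicInterior ℝ s := by
  rintro _ ⟨a, b, ha, hb, hab, rfl⟩
  obtain rfl : b = 1 - a := by linarith
  obtain ⟨hxA, U, hU, hxU, hUs⟩ := mem_intrinsicInterior_iff_exists_isOpen.1 hx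
  have hyA : y ∈ affineSpan ℝ s := subset_affineSpan ℝ s hy
  -- The homothety about `y` with ratio `a` carries the neighbourhood `U` of `x` to one of the
  -- target point, and maps `s` into itself by convexity.
  have hcombo (u : E) : homothety y a u = a • u + (1 - a) • y := by
    rw [homothety_apply, vsub_eq_sub, vadd_eq_add]; module
  rw [← hcombo]
  refine (homothety_isOpenMap y a ha.ne' _ hU).inter_affineSpan_subset_intrinsicInterior ?_
    ⟨mem_image_of_mem _ hxU, homothety_mem hyA a hxA⟩
  rintro _ ⟨⟨u, huU, rfl⟩, huA⟩
  have hu : u ∈ affineSpan ℝ s := by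
    simpa [← AffineMap.comp_apply, ← homothety_mul, ha.ne'] using homothety_mem hyA a⁻¹ huA
  rw [hcombo]
  exact hs (hUs ⟨huU, hu⟩) hy ha.le hb.le hab

protected theorem Convex.intrinsicInterior (hs : Convex ℝ s) : Convex ℝ (intrinsicInterior ℝ s) :=
  convex_iff_openSegment_subset.2 fun _ hx _ hy =>
    hs.openSegment_intrinsicInterior_self_subset_intrinsicInterior hx (intrinsicInterior_subset hy)

end TopologicalVectorSpace

section FiniteDimensional

variable {E : Type*} [NormedAddCommGroup E] [NormedSpace ℝ E] [FiniteDimensional ℝ E]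
  {s t : Set E} {x y : E}

theorem closure_subset_affineSpan (s : Set E) : closure s ⊆ affineSpan ℝ s :=
  intrinsicClosure_eq_closure ℝ s ▸ intrinsicClosure_subset_affineSpan

theorem affineSpan_closure (s : Set E) : affineSpan ℝ (closure s) = affineSpan ℝ s := by
  rw [← intrinsicClosure_eq_closure ℝ s, affineSpan_intrinsicClosure]

theorem Convex.openSegment_intrinsicInterior_closure_subset_intrinsicInterior (hs : Convex ℝ s)
    (hx : x ∈ intrinsicInterior ℝ s) (hy : y ∈ closure s) :
    openSegment ℝ x y ⊆ intrinsicInterior ℝ s := by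
  rintro _ ⟨a, b, ha, hb, hab, rfl⟩
  obtain ⟨hxA, U, hU, hxU, hUs⟩ := mem_intrinsicInterior_iff_exists_isOpen.1 hx
  -- Replace `y` by a nearby `y' ∈ s` and compensate by moving `x` to `x'`; for `y'` close
  -- to `y` the point `x'` stays in `U`, hence in the intrinsic interior.
  set shift : E → E := fun y' => (b / a) • (y - y') + x
  have hshift : Continuous shift := by fun_prop
  have hUy : shift ⁻¹' U ∈ 𝓝 y :=
    hshift.continuousAt.preimage_mem_nhds (by simpa [shift] using hU.mem_nhds hxU)
  obtain ⟨y', hy'U, hy's⟩ := mem_closure_iff_nhds.1 hy _ hUy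
  have hx'A : shift y' ∈ affineSpan ℝ s :=
    (affineSpan ℝ s).smul_vsub_vadd_mem _ (closure_subset_affineSpan s hy)
      (subset_affineSpan ℝ s hy's) hxA
  have hx' : shift y' ∈ intrinsicInterior ℝ s :=
    hU.inter_affineSpan_subset_intrinsicInterior hUs ⟨hy'U, hx'A⟩
  have hcombo : a • shift y' + b • y' = a • x + b • y := by
    simp only [shift, smul_add, smul_smul, mul_div_cancel₀ _ ha.ne']
    module
  rw [← hcombo]
  exact hs.openSegment_intrinsicInterior_self_subset_intrinsicInterior hx' hy's
    ⟨a, b, ha, hb, hab, rfl⟩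

theorem Convex.intrinsicInterior_closure (hs : Convex ℝ s) :
    intrinsicInterior ℝ (closure s) = intrinsicInterior ℝ s := by
  refine Subset.antisymm (fun z hz => ?_)
    (intrinsicInterior_mono_of_affineSpan_eq subset_closure (affineSpan_closure s).symm)
  obtain ⟨x, hx⟩ : (intrinsicInterior ℝ s).Nonempty :=
    (closure_nonempty_iff.1 ⟨z, intrinsicInterior_subset hz⟩).intrinsicInterior hs
  obtain ⟨hzA, U, hU, hzU, hUs⟩ := mem_intrinsicInterior_iff_exists_isOpen.1 hz
  rw [affineSpan_closure] at hzA hUs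
  -- Push `z` slightly away from `x`; it then lies strictly between `x` and a point of `closure s`.
  obtain ⟨δ, hδU, hδ⟩ : ∃ δ : ℝ, homothety x δ z ∈ U ∧ 1 < δ :=
    ((eventually_homothety_mem_of_mem_interior ℝ x (hU.interior_eq.symm ▸ hzU)).filter_mono
      nhdsWithin_le_nhds |>.and (self_mem_nhdsWithin : Ioi (1 : ℝ) ∈ 𝓝[>] 1)).exists
  have hy : homothety x δ z ∈ closure s :=
    hUs ⟨hδU, homothety_mem (subset_affineSpan ℝ s (intrinsicInterior_subset hx)) δ hzA⟩
  have hz_mem : z ∈ openSegment ℝ x (homothety x δ z) := by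
    rw [openSegment_eq_image_lineMap]
    refine ⟨δ⁻¹, ⟨by positivity, inv_lt_one_of_one_lt₀ hδ⟩, ?_⟩
    rw [← homothety_eq_lineMap, ← AffineMap.comp_apply, ← homothety_mul,
      inv_mul_cancel₀ (by positivity), homothety_one, AffineMap.id_apply]
  exact hs.openSegment_intrinsicInterior_closure_subset_intrinsicInterior hx hy hz_mem

theorem Convex.intrinsicInterior_eq_of_subset_of_subset_closure (hs : Convex ℝ s)
    (hst : s ⊆ t) (hts : t ⊆ closure s) : intrinsicInterior ℝ t = intrinsicInterior ℝ s := by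
  have hA : affineSpan ℝ s = affineSpan ℝ t :=
    (affineSpan_mono ℝ hst).antisymm (affineSpan_le.2 (hts.trans (closure_subset_affineSpan s)))
  refine Subset.antisymm ?_ (intrinsicInterior_mono_of_affineSpan_eq hst hA)
  rw [← hs.intrinsicInterior_closure]
  exact intrinsicInterior_mono_of_affineSpan_eq hts (hA.symm.trans (affineSpan_closure s).symm)

theorem Convex.closure_inter_closure_subset_closure_intrinsicInterior_inter (hs : Convex ℝ s)
    (ht : Convex ℝ t) (h : (intrinsicInterior ℝ s ∩ intrinsicInterior ℝ t).Nonempty) :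
    closure s ∩ closure t ⊆ closure (intrinsicInterior ℝ s ∩ intrinsicInterior ℝ t) := by
  obtain ⟨x, hxs, hxt⟩ := h
  intro y ⟨hys, hyt⟩
  refine closure_mono (subset_inter ?_ ?_)
    (segment_subset_closure_openSegment (right_mem_segment ℝ x y))
  · exact hs.openSegment_intrinsicInterior_closure_subset_intrinsicInterior hxs hys
  · exact ht.openSegment_intrinsicInterior_closure_subset_intrinsicInterior hxt hyt

end FiniteDimensional

theorem intrinsicInterior_inter_general {X : Type*} [NormedAddCommGroup X] [InnerProductSpace ℝ X]
    [FiniteDimensional ℝ X] (C D : Set X)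
    (hC : NearlyConvex C) (hD : NearlyConvex D)
    (hri : (intrinsicInterior ℝ C ∩ intrinsicInterior ℝ D).Nonempty) :
    intrinsicInterior ℝ (C ∩ D) = intrinsicInterior ℝ C ∩ intrinsicInterior ℝ D := by
  obtain ⟨c, hc, hcC, hCc⟩ := hC
  obtain ⟨d, hd, hdD, hDd⟩ := hD
  rw [hc.intrinsicInterior_eq_of_subset_of_subset_closure hcC hCc,
    hd.intrinsicInterior_eq_of_subset_of_subset_closure hdD hDd] at hri ⊢
  set K := intrinsicInterior ℝ c ∩ intrinsicInterior ℝ d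
  have hK : Convex ℝ K := hc.intrinsicInterior.inter hd.intrinsicInterior
  have hK_sub : K ⊆ C ∩ D :=
    inter_subset_inter (intrinsicInterior_subset.trans hcC) (intrinsicInterior_subset.trans hdD)
  have hsub_K : C ∩ D ⊆ closure K :=
    (inter_subset_inter hCc hDd).trans
      (hc.closure_inter_closure_subset_closure_intrinsicInterior_inter hd hri)
  rw [hK.intrinsicInterior_eq_of_subset_of_subset_closure hK_sub hsub_K,
    intrinsicInterior_inter_intrinsicInterior]

/-- If `C` and `D` are nonempty nearly convex subsets of a finite-dimensional real inner
product space with `ri C ∩ ri D ≠ ∅`, then `ri (C ∩ D) = ri C ∩ ri D`. -/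
theorem intrinsicInterior_inter {X : Type*} [NormedAddCommGroup X] [InnerProductSpace ℝ X]
    [FiniteDimensional ℝ X] (C D : Set X) (hCne : C.Nonempty) (hDne : D.Nonempty)
    (hC : NearlyConvex C) (hD : NearlyConvex D)
    (hri : (intrinsicInterior ℝ C ∩ intrinsicInterior ℝ D).Nonempty) :
    intrinsicInterior ℝ (C ∩ D) = intrinsicInterior ℝ C ∩ intrinsicInterior ℝ D :=
  intrinsicInterior_inter_general C D hC hD hri
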